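/- With R̃ = R ⊕ R̄ as above and the odd endomorphism D defined by D(ū_i) = u_i, D(u_i) = ∂ū_i, D(C̄) = C, D(C) = 0 (so [D,D] = 2∂), the pair ({ū_i}_{i∈I}, D) satisfies the supersymmetric extension formulas: (SEF1) [Dū_i _λ Dū_j] = (-1)^{p(ū_i)+1}(D[Dū_i _λ ū_j] + λ[ū_i _λ ū_j]) and (SEF2) [ū_i _λ Dū_j] = (-1)^{p(ū_i)+1}([Dū_i _λ ū_j] - D[ū_i _λ ū_j]). -/

import Mathlib

open scoped BigOperators
noncomputable section

namespace VAx

/-- `(-1)^p` for a parity `p` (`true` = odd). -/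
def psgn (p : Bool) : ℂ := if p then -1 else 1

/-- `(-1)^{pq}` for parities `p`, `q`. -/
def sgn (p q : Bool) : ℂ := if p && q then -1 else 1

/-- Multiplication by `λ` on a `λ`-expansion `f = ∑ λ^m • f m`. -/
def lam {W : Type*} [AddCommGroup W] (f : ℕ → W) : ℕ → W :=
  fun m => match m with
  | 0 => 0
  | n + 1 => f n

variable (V : Type*) [AddCommGroup V] [Module ℂ V]

/-- Underlying data of a (super) Lie conformal algebra: a `ℤ/2ℤ`-grading (`part false` the
even part, `part true` the odd part), an even derivation `∂ = der`, and a `λ`-bracket encoded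
by its coefficients: `[a_λ b] = ∑_m λ^m • B a b m` (so `B a b m = a_{(m)} b / m!`). -/
structure LCAData where
  part : Bool → Submodule ℂ V
  der : V →ₗ[ℂ] V
  B : V →ₗ[ℂ] V →ₗ[ℂ] (ℕ → V)

/-- Underlying data of a vertex algebra: a Lie conformal algebra datum together with a
vacuum vector and the normally ordered product. -/
structure VAData extends LCAData V where
  one : V
  M : V →ₗ[ℂ] V →ₗ[ℂ] V

variable {V}

namespace LCAData

variable (S : LCAData V)

/-- Coefficientwise form of the Jacobi identity
`[a_λ [b_γ c]] = [[a_λ b]_{λ+γ} c] + (-1)^{p(a)p(b)} [b_γ [a_λ c]]`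
at the coefficient of `λ^m γ^n`. -/
def JacEq (p q : Bool) (a b c : V) (m n : ℕ) : Prop :=
  S.B a (S.B b c n) m =
    (∑ j ∈ Finset.range (m + 1),
      ((Nat.choose (m - j + n) (m - j) : ℂ)) • S.B (S.B a b j) c (m - j + n))
    + sgn p q • S.B b (S.B a c m) n

/-- Coefficientwise form of skew-symmetry `[b_λ a] = (-1)^{p(a)p(b)+1}[a_{-∂-λ} b]`,
given a bound `N` on the support of `[a_λ b]`. -/
def SkewEq (p q : Bool) (a b : V) (N : ℕ) : Prop :=
  ∀ k, S.B b a k = (- sgn p q) •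
    ∑ m ∈ Finset.Icc k N, (((-1 : ℂ)) ^ m * (m.choose k : ℂ)) • ((S.der ^ (m - k)) (S.B a b m))

/-- The axioms of a (super) Lie conformal algebra, expressed coefficientwise on the
`λ`-expansion `[a_λ b] = ∑ λ^m • B a b m`. -/
structure IsLCA : Prop where
  hom_der : ∀ p, ∀ a ∈ S.part p, S.der a ∈ S.part p
  hom_B : ∀ p q a b, a ∈ S.part p → b ∈ S.part q → ∀ m, S.B a b m ∈ S.part (xor p q)
  sesq1 : ∀ a b, S.B (S.der a) b 0 = 0 ∧ ∀ m, S.B (S.der a) b (m + 1) = - S.B a b m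
  sesq2 : ∀ a b, S.B a (S.der b) 0 = S.der (S.B a b 0) ∧
    ∀ m, S.B a (S.der b) (m + 1) = S.der (S.B a b (m + 1)) + S.B a b m
  bfin : ∀ a b, ∃ N, ∀ m, N ≤ m → S.B a b m = 0
  skew : ∀ p q a b N, a ∈ S.part p → b ∈ S.part q →
    (∀ m, N ≤ m → S.B a b m = 0) → S.SkewEq p q a b N
  jacobi : ∀ p q a b c, a ∈ S.part p → b ∈ S.part q → ∀ m n, S.JacEq p q a b c m n

/-- The supersymmetric extension formulas (SEF1) and (SEF2) for the ordered pair `(x, y)`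
(thought of as `(ā, b̄)`), where `p` is the parity of `x` and `D` is the odd endomorphism:
(SEF1) `[Dx_λ Dy] = (-1)^{p(x)+1}(D[Dx_λ y] + λ[x_λ y])`,
(SEF2) `[x_λ Dy] = (-1)^{p(x)+1}([Dx_λ y] - D[x_λ y])`. -/
def SEF (D : Module.End ℂ V) (p : Bool) (x y : V) : Prop :=
  (∀ m, S.B (D x) (D y) m = psgn (!p) • (D (S.B (D x) y m) + lam (S.B x y) m)) ∧
  (∀ m, S.B x (D y) m = psgn (!p) • (S.B (D x) y m - D (S.B x y m)))

end LCAData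

namespace VAData

variable (S : VAData V)

/-- The integral term `∫_0^λ [[a_λ b]_γ c] dγ` of the non-commutative Wick formula, at the
coefficient of `λ^k`, where `f` is the `λ`-expansion of `[a_λ b]`. -/
def wickInt (f : ℕ → V) (c : V) : ℕ → V :=
  fun k => ∑ n ∈ Finset.range k, ((n + 1 : ℂ))⁻¹ • S.B (f (k - 1 - n)) c n

/-- The axioms of a vertex algebra, in the `λ`-bracket formalism, expressed coefficientwise. -/
structure IsVA : Prop where
  isLCA : S.toLCAData.IsLCA
  one_even : S.one ∈ S.part false
  der_one : S.der S.one = 0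
  M_one_left : ∀ a, S.M S.one a = a
  M_one_right : ∀ a, S.M a S.one = a
  B_one_left : ∀ a m, S.B S.one a m = 0
  B_one_right : ∀ a m, S.B a S.one m = 0
  hom_M : ∀ p q a b, a ∈ S.part p → b ∈ S.part q → S.M a b ∈ S.part (xor p q)
  qcomm : ∀ p q a b N, a ∈ S.part p → b ∈ S.part q → (∀ m, N ≤ m → S.B a b m = 0) →
    S.M a b - sgn p q • S.M b a =
      ∑ m ∈ Finset.range (N + 1),
        (((-1 : ℂ) ^ m) * ((m + 1 : ℂ))⁻¹) • ((S.der ^ (m + 1)) (S.B a b m))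
  wick : ∀ p q a b c, a ∈ S.part p → b ∈ S.part q → ∀ k,
    S.B a (S.M b c) k = S.M (S.B a b k) c + sgn p q • S.M b (S.B a c k)
      + S.wickInt (S.B a b) c k

/-- `D` is an odd endomorphism of `V` which is an odd derivation of both the normally ordered
product and the `λ`-bracket. -/
def IsOddDerivation (D : Module.End ℂ V) : Prop :=
  (∀ p, ∀ a ∈ S.part p, D a ∈ S.part (!p)) ∧
  (∀ p a b, a ∈ S.part p → D (S.M a b) = S.M (D a) b + psgn p • S.M a (D b)) ∧
  (∀ p a b m, a ∈ S.part p → D (S.B a b m) = S.B (D a) b m + psgn p • S.B a (D b) m)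

/-- The operator `x ↦ a_{(k)} x` (normalized by `1/k!`). -/
def opAt (a : V) (k : ℕ) : Module.End ℂ V :=
  (LinearMap.proj (R := ℂ) (φ := fun _ : ℕ => V) k).comp (S.B a)

/-- Diagonalizability of an endomorphism. -/
def IsDiag (f : Module.End ℂ V) : Prop :=
  (⨆ μ : ℂ, f.eigenspace μ) = ⊤

/-- `G` is an `N = 1` superconformal vector of `V` with central charge `c`: `G` is odd,
`L := (1/2) G_{(0)} G` is a conformal vector (`L_{(0)} = ∂`, `L_{(1)}` diagonalizable), and the
super-Virasoro relations `[L_λ L] = (∂+2λ)L + (c/12)λ³ |0⟩`, `[L_λ G] = (∂ + (3/2)λ)G`,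
`[G_λ G] = 2L + (c/3)λ² |0⟩` hold. -/
def IsSCV (G : V) (c : ℂ) : Prop :=
  G ∈ S.part true ∧
  S.B G G 1 = 0 ∧
  S.B G G 2 = (c / 3) • S.one ∧
  (∀ m, 3 ≤ m → S.B G G m = 0) ∧
  (S.B ((1 / 2 : ℂ) • S.B G G 0) ((1 / 2 : ℂ) • S.B G G 0) = fun m =>
    match m with
    | 0 => S.der ((1 / 2 : ℂ) • S.B G G 0)
    | 1 => (2 : ℂ) • ((1 / 2 : ℂ) • S.B G G 0)
    | 3 => (c / 12) • S.one
    | _ => 0) ∧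
  (S.B ((1 / 2 : ℂ) • S.B G G 0) G = fun m =>
    match m with
    | 0 => S.der G
    | 1 => (3 / 2 : ℂ) • G
    | _ => 0) ∧
  (∀ x, S.B ((1 / 2 : ℂ) • S.B G G 0) x 0 = S.der x) ∧
  IsDiag (S.opAt ((1 / 2 : ℂ) • S.B G G 0) 1)

/-- The `N = 1` `Λ`-bracket `[a_Λ b] := [Da_λ b] + χ[a_λ b]`, encoded as the pair
`(λ`-expansion of `[Da_λ b]`, `λ`-expansion of `[a_λ b])` (the second component being the
coefficient of `χ`). -/
def SB (D : Module.End ℂ V) (a b : V) : (ℕ → V) × (ℕ → V) :=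
  (S.B (D a) b, S.B a b)

end VAData

end VAx

open VAx VAx.LCAData

variable {V : Type*} [AddCommGroup V] [Module ℂ V]

/-- The Lie conformal algebra `R̃ = R ⊕ R̄` of Theorem 5.4: the underlying space is `R × R`
(second factor the parity-reversed copy `R̄`, `x̄ := (0,x)`), with
`[ū_λ u] = overline([u'_λ u])`, `[u_λ ū] = (-1)^{p(u)} overline([u_λ u'])`, `[ū_λ ū'] = 0`.
Here `σ` is the parity involution of `R` (`σ = id` on the even part, `σ = -id` on the odd
part), which implements the sign `(-1)^{p(u)}`. -/
def barProd (S : VAx.LCAData V) (σ : V →ₗ[ℂ] V) : VAx.LCAData (V × V) where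
  part := fun p => (S.part p).prod (S.part (!p))
  der := S.der.prodMap S.der
  B := LinearMap.mk₂ ℂ
    (fun x y => fun m => (S.B x.1 y.1 m, S.B x.2 y.1 m + S.B (σ x.1) y.2 m))
    (by
      intro a b y; funext m
      simp [map_add, LinearMap.add_apply, Pi.add_apply, Prod.ext_iff]
      abel)
    (by
      intro c a y; funext m
      simp [map_smul, LinearMap.smul_apply, Pi.smul_apply, Prod.ext_iff, smul_add])
    (by
      intro a y z; funext m
      simp [map_add, LinearMap.add_apply, Pi.add_apply, Prod.ext_iff]
      abel)
    (by
      intro c a y; funext m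
      simp [map_smul, LinearMap.smul_apply, Pi.smul_apply, Prod.ext_iff, smul_add])

/-- The odd endomorphism `D` of `R̃ = R ⊕ R̄` with `D(ū) = u` and `D(u) = ∂ū`
(so `D(x, x') = (x', ∂x)` and `[D,D] = 2∂`). -/
def barD (S : VAx.LCAData V) : Module.End ℂ (V × V) :=
  (LinearMap.snd ℂ V V).prod (S.der.comp (LinearMap.fst ℂ V V))

namespace VAx

@[simp]
theorem psgn_mul_self (p : Bool) : psgn p * psgn p = 1 := by
  cases p <;> simp [psgn]

@[simp]
theorem lam_zero {W : Type*} [AddCommGroup W] : lam (0 : ℕ → W) = 0 := by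
  funext m
  cases m <;> rfl

end VAx

section BarProd

variable (S : LCAData V) (σ : V →ₗ[ℂ] V)

@[simp]
theorem barProd_B_apply (x y : V × V) (m : ℕ) :
    (barProd S σ).B x y m = (S.B x.1 y.1 m, S.B x.2 y.1 m + S.B (σ x.1) y.2 m) :=
  rfl

@[simp]
theorem barD_apply (x : V × V) : barD S x = (x.2, S.der x.1) :=
  rfl

theorem barProd_B_bar_bar (a b : V) : (barProd S σ).B ((0 : V), a) ((0 : V), b) = 0 := by
  funext m
  simp

theorem parity_apply_of_mem {σ : V →ₗ[ℂ] V}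
    (hσe : ∀ a ∈ S.part false, σ a = a) (hσo : ∀ a ∈ S.part true, σ a = -a)
    {p : Bool} {a : V} (ha : a ∈ S.part p) : σ a = psgn p • a := by
  cases p
  · simpa [psgn] using hσe a ha
  · simpa [psgn] using hσo a ha

variable {S σ}

/-- Since `Dā = a` and `[ā_λ b̄] = 0`, both sides of (SEF1) and (SEF2) reduce to `[a_λ b]` or
its bar, up to the sign `(-1)^{p(a)}` from `σ`, which cancels against the prefactor. -/
theorem sef_bar_of_parity_apply {p : Bool} {a : V} (hσa : σ a = psgn p • a) (b : V) :
    (barProd S σ).SEF (barD S) (!p) ((0 : V), a) ((0 : V), b) := by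
  refine ⟨fun m => ?_, fun m => ?_⟩
  · simp [barProd_B_bar_bar, hσa, smul_smul]
  · simp [hσa, smul_smul]

end BarProd

theorem stmt_7_general (S : VAx.LCAData V)
    (σ : V →ₗ[ℂ] V)
    (hσe : ∀ a ∈ S.part false, σ a = a) (hσo : ∀ a ∈ S.part true, σ a = -a) :
    ∀ (p : Bool) (a : V), a ∈ S.part p → ∀ (q : Bool) (b : V), b ∈ S.part q →
      (barProd S σ).SEF (barD S) (!p) ((0 : V), a) ((0 : V), b) :=
  fun _ _ ha _ b _ => sef_bar_of_parity_apply (parity_apply_of_mem S hσe hσo ha) b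

/-- With `R̃ = R ⊕ R̄` as in Theorem 5.4 and the odd endomorphism `D` defined by
`D(ū_i) = u_i`, `D(u_i) = ∂ū_i` (so `[D,D] = 2∂`), the pair `({ū_i}, D)` satisfies the
supersymmetric extension formulas (SEF1) and (SEF2): for all homogeneous `a, b ∈ R`, the pair
`(ā, b̄) = ((0,a),(0,b))` satisfies
`[Dā_λ Db̄] = (-1)^{p(ā)+1}(D[Dā_λ b̄] + λ[ā_λ b̄])` and
`[ā_λ Db̄] = (-1)^{p(ā)+1}([Dā_λ b̄] - D[ā_λ b̄])`. -/
theorem stmt_7 (S : VAx.LCAData V) (hS : S.IsLCA)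
    (σ : V →ₗ[ℂ] V)
    (hσe : ∀ a ∈ S.part false, σ a = a) (hσo : ∀ a ∈ S.part true, σ a = -a)
    (hspan : S.part false ⊔ S.part true = ⊤) :
    ∀ (p : Bool) (a : V), a ∈ S.part p → ∀ (q : Bool) (b : V), b ∈ S.part q →
      (barProd S σ).SEF (barD S) (!p) ((0 : V), a) ((0 : V), b) :=
  stmt_7_general S σ hσe hσo
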